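/- arXiv:1104.1998 — 6 statements merged into one kernel-verified Lean document; each statement's English description precedes it below -/
import Mathlib

section
/- If safeFrame(env, f, H, r, args, Q) holds and f ⟶frm f' (the frame takes an intra-frame, non-mutating step), then safeFrame(env, f', H, r, args, Q) holds. -/
/-- An ordered commutative monoid of consumable resources, whose unit is the
least element and whose operation is monotone. -/
structure ResMon : Type 1 where
  carrier : Type
  le : carrier → carrier → Prop
  op : carrier → carrier → carrier
  e : carrier
  le_refl : ∀ r, le r r
  le_trans : ∀ {a b c}, le a b → le b c → le a c
  op_comm : ∀ a b, op a b = op b a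
  op_assoc : ∀ a b c, op (op a b) c = op a (op b c)
  op_e : ∀ a, op a e = a
  e_le : ∀ a, le e a
  op_mono : ∀ {a b c d}, le a b → le c d → le (op a c) (op b d)

/-- Values: possibly-null addresses and integers. -/
inductive Val (A : Type) where
  | addr : Option A → Val A
  | int : ℤ → Val A

/-- Field types. -/
inductive Ty where
  | int | ref

def Ty.defaultVal {A : Type} : Ty → Val A
  | .int => .int 0
  | .ref => .addr none

/-- Heaps: finite partial maps from (address, field name) pairs to values. -/
abbrev Heap (A F : Type) : Type := Finmap (fun _ : A × F => Val A)

/-- Instructions of the virtual machine. -/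
inductive Instr (F P R : Type) where
  | iconst (z : ℤ)
  | ibinop (op : ℤ → ℤ → ℤ)
  | pop
  | load (n : ℕ)
  | store (n : ℕ)
  | aconstNull
  | binarycmp (cmp : ℤ → ℤ → Prop) (offset : ℕ)
  | unarycmp (cmp : ℤ → ℤ → Prop) (offset : ℕ)
  | ifnull (offset : ℕ)
  | goto (offset : ℕ)
  | new (desc : List (F × Ty))
  | getfield (f : F)
  | putfield (f : F)
  | free (desc : List (F × Ty))
  | consume (r : R)
  | ret
  | call (p : P)

/-- Activation frames. -/
structure Frame (A F P R : Type) where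
  code : List (Instr F P R)
  stack : List (Val A)
  locals : ℕ → Option (Val A)
  pc : ℕ

/-- Intra-frame small-step semantics (Figure 1). -/
inductive FrmStep {A F P R : Type} : Frame A F P R → Frame A F P R → Prop where
  | iconst {code : List (Instr F P R)} {S L pc z} :
      code[pc]? = some (.iconst z) →
      FrmStep ⟨code, S, L, pc⟩ ⟨code, .int z :: S, L, pc + 1⟩
  | ibinop {code : List (Instr F P R)} {op S L pc z₁ z₂} :
      code[pc]? = some (.ibinop op) →
      FrmStep ⟨code, .int z₁ :: .int z₂ :: S, L, pc⟩ ⟨code, .int (op z₁ z₂) :: S, L, pc + 1⟩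
  | pop {code : List (Instr F P R)} {v : Val A} {S L pc} :
      code[pc]? = some .pop →
      FrmStep ⟨code, v :: S, L, pc⟩ ⟨code, S, L, pc + 1⟩
  | load {code : List (Instr F P R)} {S L pc n} {v : Val A} :
      code[pc]? = some (.load n) → L n = some v →
      FrmStep ⟨code, S, L, pc⟩ ⟨code, v :: S, L, pc + 1⟩
  | store {code : List (Instr F P R)} {S L pc n} {v : Val A} :
      code[pc]? = some (.store n) →
      FrmStep ⟨code, v :: S, L, pc⟩ ⟨code, S, fun m => if m = n then some v else L m, pc + 1⟩
  | aconstNull {code : List (Instr F P R)} {S L pc} :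
      code[pc]? = some .aconstNull →
      FrmStep ⟨code, S, L, pc⟩ ⟨code, .addr none :: S, L, pc + 1⟩
  | binarycmpT {code : List (Instr F P R)} {cmp off S L pc z₁ z₂} :
      code[pc]? = some (.binarycmp cmp off) → cmp z₁ z₂ →
      FrmStep ⟨code, .int z₁ :: .int z₂ :: S, L, pc⟩ ⟨code, S, L, off⟩
  | binarycmpF {code : List (Instr F P R)} {cmp off S L pc z₁ z₂} :
      code[pc]? = some (.binarycmp cmp off) → ¬ cmp z₁ z₂ →
      FrmStep ⟨code, .int z₁ :: .int z₂ :: S, L, pc⟩ ⟨code, S, L, pc + 1⟩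
  | unarycmpT {code : List (Instr F P R)} {cmp off S L pc z} :
      code[pc]? = some (.unarycmp cmp off) → cmp z 0 →
      FrmStep ⟨code, .int z :: S, L, pc⟩ ⟨code, S, L, off⟩
  | unarycmpF {code : List (Instr F P R)} {cmp off S L pc z} :
      code[pc]? = some (.unarycmp cmp off) → ¬ cmp z 0 →
      FrmStep ⟨code, .int z :: S, L, pc⟩ ⟨code, S, L, pc + 1⟩
  | ifnullT {code : List (Instr F P R)} {off S L pc} :
      code[pc]? = some (.ifnull off) →
      FrmStep ⟨code, .addr none :: S, L, pc⟩ ⟨code, S, L, off⟩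
  | ifnullF {code : List (Instr F P R)} {off S L pc} {a : A} :
      code[pc]? = some (.ifnull off) →
      FrmStep ⟨code, .addr (some a) :: S, L, pc⟩ ⟨code, S, L, pc + 1⟩
  | goto {code : List (Instr F P R)} {off S L pc} :
      code[pc]? = some (.goto off) →
      FrmStep ⟨code, S, L, pc⟩ ⟨code, S, L, off⟩

variable {A F P : Type}

/-- Allocate a fresh object at address `a` with fields given by `desc`. -/
def allocHeap [DecidableEq A] [DecidableEq F] (H : Heap A F) (a : A) (desc : List (F × Ty)) :
    Heap A F :=
  desc.foldl (fun h fd => h.insert (a, fd.1) fd.2.defaultVal) H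

/-- Remove the fields of the object at address `a` described by `desc`. -/
def freeHeap [DecidableEq A] [DecidableEq F] (H : Heap A F) (a : A) (desc : List (F × Ty)) :
    Heap A F :=
  desc.foldl (fun h fd => h.erase (a, fd.1)) H

/-- Heap- and resource-mutating small-step semantics (Figure 2). -/
inductive MutStep (M : ResMon) [DecidableEq A] [DecidableEq F] :
    Frame A F P M.carrier → Heap A F → Frame A F P M.carrier → Heap A F → M.carrier → Prop where
  | new {code S L pc desc} {a : A} {H : Heap A F} :
      code[pc]? = some (.new desc) → (∀ fnm : F, (a, fnm) ∉ H) →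
      MutStep M ⟨code, S, L, pc⟩ H ⟨code, .addr (some a) :: S, L, pc + 1⟩ (allocHeap H a desc) M.e
  | getfield {code S L pc f} {a : A} {v : Val A} {H : Heap A F} :
      code[pc]? = some (.getfield f) → H.lookup (a, f) = some v →
      MutStep M ⟨code, .addr (some a) :: S, L, pc⟩ H ⟨code, v :: S, L, pc + 1⟩ H M.e
  | putfield {code S L pc f} {a : A} {v : Val A} {H : Heap A F} :
      code[pc]? = some (.putfield f) →
      MutStep M ⟨code, .addr (some a) :: v :: S, L, pc⟩ H ⟨code, S, L, pc + 1⟩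
        (H.insert (a, f) v) M.e
  | free {code S L pc desc} {a : A} {H : Heap A F} :
      code[pc]? = some (.free desc) →
      MutStep M ⟨code, .addr (some a) :: S, L, pc⟩ H ⟨code, S, L, pc + 1⟩
        (freeHeap H a desc) M.e
  | consume {code S L pc r} {H : Heap A F} :
      code[pc]? = some (.consume r) →
      MutStep M ⟨code, S, L, pc⟩ H ⟨code, S, L, pc + 1⟩ H r

/-- Procedure specifications ⟨𝔼, P, Q⟩ (with the arity determined by the name). -/
structure ProcSpec (M : ResMon) (A F : Type) where
  arity : ℕ
  E : Type
  pre : E → List (Val A) → Heap A F → M.carrier → Prop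
  post : E → List (Val A) → Heap A F → M.carrier → Val A → Prop

/-- Intermediate assertions. -/
abbrev Assn (M : ResMon) (A F E : Type) : Type :=
  E → List (Val A) → M.carrier → Heap A F → List (Val A) → (ℕ → Option (Val A)) → Prop

/-- Post-conditions. -/
abbrev Post (M : ResMon) (A F E : Type) : Type :=
  E → List (Val A) → Heap A F → M.carrier → Val A → Prop

/-- The ternary combination relation `R (H₁,r₁) (H₂,r₂) (H₃,r₃)` on heap–resource pairs. -/
def Combines (M : ResMon) [DecidableEq A] [DecidableEq F] (H₁ : Heap A F) (r₁ : M.carrier)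
    (H₂ : Heap A F) (r₂ : M.carrier) (H₃ : Heap A F) (r₃ : M.carrier) : Prop :=
  H₁.Disjoint H₂ ∧ H₁ ∪ H₂ = H₃ ∧ M.le (M.op r₁ r₂) r₃

/-- The assertion `A` such that `C ⊢_Q {A} ⇒ i : ι` by the program-logic rules (Figure 4). -/
def instrPre (M : ResMon) [DecidableEq A] [DecidableEq F] {E : Type}
    (specs : P → ProcSpec M A F) (Q : Post M A F E) (C : ℕ → Assn M A F E) (i : ℕ) :
    Instr F P M.carrier → Assn M A F E
  | .iconst z => fun env args r H S L => C (i + 1) env args r H (.int z :: S) L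
  | .ibinop op => fun env args r H S L => ∀ z₁ z₂ S', S = .int z₁ :: .int z₂ :: S' →
      C (i + 1) env args r H (.int (op z₁ z₂) :: S') L
  | .pop => fun env args r H S L => ∀ v S', S = v :: S' → C (i + 1) env args r H S' L
  | .load n => fun env args r H S L => ∀ v, L n = some v → C (i + 1) env args r H (v :: S) L
  | .store n => fun env args r H S L => ∀ v S', S = v :: S' →
      C (i + 1) env args r H S' (fun m => if m = n then some v else L m)
  | .aconstNull => fun env args r H S L => C (i + 1) env args r H (.addr none :: S) L
  | .binarycmp cmp off => fun env args r H S L => ∀ z₁ z₂ S', S = .int z₁ :: .int z₂ :: S' →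
      (cmp z₁ z₂ → C off env args r H S' L) ∧ (¬ cmp z₁ z₂ → C (i + 1) env args r H S' L)
  | .unarycmp cmp off => fun env args r H S L => ∀ z S', S = .int z :: S' →
      (cmp z 0 → C off env args r H S' L) ∧ (¬ cmp z 0 → C (i + 1) env args r H S' L)
  | .ifnull off => fun env args r H S L => ∀ a S', S = .addr a :: S' →
      (a ≠ none → C (i + 1) env args r H S' L) ∧ (a = none → C off env args r H S' L)
  | .goto off => fun env args r H S L => C off env args r H S L
  | .new desc => fun env args r H S L => ∀ a : A, (∀ fnm : F, (a, fnm) ∉ H) →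
      C (i + 1) env args r (allocHeap H a desc) (.addr (some a) :: S) L
  | .getfield f => fun env args r H S L => ∀ a S', S = .addr (some a) :: S' →
      ∃ v, H.lookup (a, f) = some v ∧ C (i + 1) env args r H (v :: S') L
  | .putfield f => fun env args r H S L => ∀ a v S', S = .addr (some a) :: v :: S' →
      (a, f) ∈ H ∧ C (i + 1) env args r (H.insert (a, f) v) S' L
  | .free desc => fun env args r H S L => ∀ a S', S = .addr (some a) :: S' →
      C (i + 1) env args r (freeHeap H a desc) S' L
  | .consume rc => fun env args r H S L =>
      ∃ r', M.le (M.op rc r') r ∧ C (i + 1) env args r' H S L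
  | .ret => fun env args r H S _ => ∀ v S', S = v :: S' → Q env args H r v
  | .call p => fun env args r H S L => ∀ args' S', S = args' ++ S' →
      args'.length = (specs p).arity →
      ∃ (env' : (specs p).E) (H₁ H₂ : Heap A F) (r₁ r₂ : M.carrier),
        Combines M H₁ r₁ H₂ r₂ H r ∧ (specs p).pre env' args' H₁ r₁ ∧
        ∀ (v : Val A) (H₁' : Heap A F) (r₁' : M.carrier),
          H₁'.Disjoint H₂ → (specs p).post env' args' H₁' r₁' v →
          C (i + 1) env args (M.op r₁' r₂) (H₁' ∪ H₂) (v :: S') L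

/-- `C ⊢ code : Q`: the certificate `C` certifies `code` against post-condition `Q`. -/
def CertValid (M : ResMon) [DecidableEq A] [DecidableEq F] {E : Type}
    (specs : P → ProcSpec M A F) (Q : Post M A F E) (C : ℕ → Assn M A F E)
    (code : List (Instr F P M.carrier)) : Prop :=
  ∀ i ι, code[i]? = some ι →
    ∀ env args r H S L, C i env args r H S L → instrPre M specs Q C i ι env args r H S L

/-- `safeFrame(env, f, H, r, args, Q)`. -/
def SafeFrame (M : ResMon) [DecidableEq A] [DecidableEq F] {E : Type}
    (specs : P → ProcSpec M A F) (env : E) (f : Frame A F P M.carrier)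
    (H : Heap A F) (r : M.carrier) (args : List (Val A)) (Q : Post M A F E) : Prop :=
  ∃ C : ℕ → Assn M A F E, CertValid M specs Q C f.code ∧
    C f.pc env args r H f.stack f.locals

/-- Locals initialised to the list of arguments, `⌜args⌝`. -/
def toLocals {A : Type} (args : List (Val A)) : ℕ → Option (Val A) := fun n => args[n]?

/-- Machine states. -/
structure State (M : ResMon) (A F P : Type) where
  consumed : M.carrier
  heap : Heap A F
  frames : List (Frame A F P M.carrier)

/-- Small-step semantics of the full machine (Figure 3). -/
inductive ProgStep (M : ResMon) [DecidableEq A] [DecidableEq F]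
    (prg : P → List (Instr F P M.carrier)) (specs : P → ProcSpec M A F) :
    State M A F P → State M A F P → Prop where
  | frm {r H f f' fs} : FrmStep f f' →
      ProgStep M prg specs ⟨r, H, f :: fs⟩ ⟨r, H, f' :: fs⟩
  | mut {r H H' f f' fs rc} : MutStep M f H f' H' rc →
      ProgStep M prg specs ⟨r, H, f :: fs⟩ ⟨M.op r rc, H', f' :: fs⟩
  | ret {r H code v S L pc code' S' L' pc' fs} :
      code[pc]? = some .ret →
      ProgStep M prg specs
        ⟨r, H, (⟨code, v :: S, L, pc⟩ : Frame A F P M.carrier) :: ⟨code', S', L', pc'⟩ :: fs⟩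
        ⟨r, H, (⟨code', v :: S', L', pc'⟩ : Frame A F P M.carrier) :: fs⟩
  | call {r H code args S L pc fs p} :
      code[pc]? = some (.call p) → args.length = (specs p).arity →
      ProgStep M prg specs
        ⟨r, H, (⟨code, args ++ S, L, pc⟩ : Frame A F P M.carrier) :: fs⟩
        ⟨r, H, (⟨prg p, [], toLocals args, 0⟩ : Frame A F P M.carrier) ::
               ⟨code, S, L, pc + 1⟩ :: fs⟩

/-- `safeStack(fs, H, r, env_cur, args_cur, Q_cur, env_top, args_top, Q_top)`. -/
inductive SafeStack (M : ResMon) [DecidableEq A] [DecidableEq F]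
    (specs : P → ProcSpec M A F) :
    List (Frame A F P M.carrier) → Heap A F → M.carrier →
    (Ec : Type) → Ec → List (Val A) → Post M A F Ec →
    (Et : Type) → Et → List (Val A) → Post M A F Et → Prop where
  | nil (E : Type) (env : E) (args : List (Val A)) (Q : Post M A F E) :
      SafeStack M specs [] ∅ M.e E env args Q E env args Q
  | cons {code S L pc fs} {H : Heap A F} {r : M.carrier}
      (Ec : Type) (envc : Ec) (argsc : List (Val A)) (Qc : Post M A F Ec)
      (Et : Type) (envt : Et) (argst : List (Val A)) (Qt : Post M A F Et)
      (H₁ H₂ : Heap A F) (r₁ r₂ : M.carrier)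
      (E : Type) (env : E) (args : List (Val A)) (Q : Post M A F E)
      (C : ℕ → Assn M A F E) :
      Combines M H₁ r₁ H₂ r₂ H r →
      CertValid M specs Q C code →
      (∀ (v : Val A) (H₂' : Heap A F) (r₂' : M.carrier),
        H₂'.Disjoint H₁ → Qc envc argsc H₂' r₂' v →
        C pc env args (M.op r₂' r₁) (H₂' ∪ H₁) (v :: S) L) →
      SafeStack M specs fs H₂ r₂ E env args Q Et envt argst Qt →
      SafeStack M specs ((⟨code, S, L, pc⟩ : Frame A F P M.carrier) :: fs) H r
        Ec envc argsc Qc Et envt argst Qt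

/-- `safeState(s, env, args, Q, r_max)`. -/
def SafeState (M : ResMon) [DecidableEq A] [DecidableEq F] {E : Type}
    (specs : P → ProcSpec M A F) (s : State M A F P)
    (env : E) (args : List (Val A)) (Q : Post M A F E) (rmax : M.carrier) : Prop :=
  ∃ rfut : M.carrier, M.le (M.op s.consumed rfut) rmax ∧
    ∃ (H₁ H₂ : Heap A F) (r₁ r₂ : M.carrier), Combines M H₁ r₁ H₂ r₂ s.heap rfut ∧
      ∃ (f : Frame A F P M.carrier) (fs' : List (Frame A F P M.carrier)),
        s.frames = f :: fs' ∧
        ∃ (Ec : Type) (envc : Ec) (argsc : List (Val A)) (Qc : Post M A F Ec),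
          SafeFrame M specs envc f H₁ r₁ argsc Qc ∧
          SafeStack M specs fs' H₂ r₂ Ec envc argsc Qc E env args Q

/-- Every procedure of the program matches its specification. -/
def PrgMatches (M : ResMon) [DecidableEq A] [DecidableEq F]
    (prg : P → List (Instr F P M.carrier)) (specs : P → ProcSpec M A F) : Prop :=
  ∀ p : P, ∃ C : ℕ → Assn M A F (specs p).E,
    CertValid M specs (specs p).post C (prg p) ∧
    ∀ env args H r, (specs p).pre env args H r → C 0 env args r H [] (toLocals args)

/-- `s ↓ H, r, v`: the state halts with final heap `H`, consumed resource `r`,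
return value `v`. -/
def Halts (M : ResMon) (s : State M A F P) (H : Heap A F) (r : M.carrier) (v : Val A) : Prop :=
  ∃ (code : List (Instr F P M.carrier)) (S : List (Val A)) (L : ℕ → Option (Val A)) (pc : ℕ),
    s.frames = [⟨code, v :: S, L, pc⟩] ∧ code[pc]? = some .ret ∧ s.heap = H ∧ s.consumed = r

theorem FrmStep.code_eq {A F P R : Type} {f f' : Frame A F P R} (hstep : FrmStep f f') :
    f'.code = f.code := by
  cases hstep <;> rfl

theorem CertValid.holds_of_frmStep {M : ResMon} [DecidableEq A] [DecidableEq F] {E : Type}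
    {specs : P → ProcSpec M A F} {Q : Post M A F E} {C : ℕ → Assn M A F E}
    {f f' : Frame A F P M.carrier} {env : E} {args : List (Val A)} {H : Heap A F}
    {r : M.carrier} (hC : CertValid M specs Q C f.code)
    (hpc : C f.pc env args r H f.stack f.locals) (hstep : FrmStep f f') :
    C f'.pc env args r H f'.stack f'.locals := by
  cases hstep with
  | iconst h | aconstNull h | goto h => exact hC _ _ h _ _ _ _ _ _ hpc
  | load h hL => exact hC _ _ h _ _ _ _ _ _ hpc _ hL
  | pop h | store h => exact hC _ _ h _ _ _ _ _ _ hpc _ _ rfl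
  | ibinop h => exact hC _ _ h _ _ _ _ _ _ hpc _ _ _ rfl
  | binarycmpT h hcmp => exact (hC _ _ h _ _ _ _ _ _ hpc _ _ _ rfl).1 hcmp
  | binarycmpF h hcmp => exact (hC _ _ h _ _ _ _ _ _ hpc _ _ _ rfl).2 hcmp
  | unarycmpT h hcmp => exact (hC _ _ h _ _ _ _ _ _ hpc _ _ rfl).1 hcmp
  | unarycmpF h hcmp => exact (hC _ _ h _ _ _ _ _ _ hpc _ _ rfl).2 hcmp
  | ifnullT h => exact (hC _ _ h _ _ _ _ _ _ hpc _ _ rfl).2 rfl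
  | ifnullF h => exact (hC _ _ h _ _ _ _ _ _ hpc _ _ rfl).1 (Option.some_ne_none _)

/-- **Lemma (Intra-frame safety preservation, part 1).** If
`safeFrame(env, f, H, r, args, Q)` holds and `f ⟶frm f'`, then
`safeFrame(env, f', H, r, args, Q)` holds. -/
theorem frame_safety_frm (M : ResMon) {A F P : Type} [DecidableEq A] [DecidableEq F] {E : Type}
    (specs : P → ProcSpec M A F) (env : E) (f f' : Frame A F P M.carrier)
    (H : Heap A F) (r : M.carrier) (args : List (Val A)) (Q : Post M A F E)
    (hsafe : SafeFrame M specs env f H r args Q)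
    (hstep : FrmStep f f') :
    SafeFrame M specs env f' H r args Q := by
  obtain ⟨C, hC, hpc⟩ := hsafe
  exact ⟨C, hstep.code_eq ▸ hC, hC.holds_of_frmStep hpc hstep⟩
end

section
/- Let φ be a propositional BI formula built from atoms R_{r₀} (for consumable resources r₀), the constants ⊤ and emp, and the connectives ∧, ∨, → and * (in particular, φ does not contain the multiplicative implication —∗). Then for every consumable resource r and every environment η: r ⊨_bi φ in the affine intuitionistic BI semantics over (𝓡, ⊑, ·, e) if and only if η, (∅, r) ⊨ φ in the heap-and-resource semantics at the empty heap ∅. -/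
/-- The null value. -/
def Val.null {A : Type} : Val A := .addr none

/-- Terms of the assertion logic: logical variables and the constant null. -/
inductive Term where
  | var (x : ℕ)
  | null

/-- Interpretation of terms in an environment. -/
def Term.eval {A : Type} (η : ℕ → Val A) : Term → Val A
  | .var x => η x
  | .null => .addr none

/-- Formulae of the deep assertion logic. -/
inductive Formula (F R : Type) where
  | tt
  | eq (t₁ t₂ : Term)
  | ne (t₁ t₂ : Term)
  | and (φ₁ φ₂ : Formula F R)
  | or (φ₁ φ₂ : Formula F R)
  | imp (φ₁ φ₂ : Formula F R)
  | emp
  | star (φ₁ φ₂ : Formula F R)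
  | wand (φ₁ φ₂ : Formula F R)
  | all (x : ℕ) (φ : Formula F R)
  | ex (x : ℕ) (φ : Formula F R)
  | points (t₁ : Term) (f : F) (t₂ : Term)
  | res (r : R)

/-- The semantics of the deep assertion logic (Figure 6):
`Sat M φ η H r` is `η, (H, r) ⊨ φ`. -/
def Sat (M : ResMon) {A F : Type} [DecidableEq A] [DecidableEq F] :
    Formula F M.carrier → (ℕ → Val A) → Heap A F → M.carrier → Prop
  | .tt => fun _ _ _ => True
  | .eq t₁ t₂ => fun η _ _ => t₁.eval η = t₂.eval η
  | .ne t₁ t₂ => fun η _ _ => t₁.eval η ≠ t₂.eval η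
  | .and φ₁ φ₂ => fun η H r => Sat M φ₁ η H r ∧ Sat M φ₂ η H r
  | .or φ₁ φ₂ => fun η H r => Sat M φ₁ η H r ∨ Sat M φ₂ η H r
  | .imp φ₁ φ₂ => fun η H r => ∀ r', M.le r r' → Sat M φ₁ η H r' → Sat M φ₂ η H r'
  | .emp => fun _ H _ => H = ∅
  | .star φ₁ φ₂ => fun η H r =>
      ∃ (H₁ H₂ : Heap A F) (r₁ r₂ : M.carrier),
        H₁.Disjoint H₂ ∧ H₁ ∪ H₂ = H ∧ M.le (M.op r₁ r₂) r ∧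
        Sat M φ₁ η H₁ r₁ ∧ Sat M φ₂ η H₂ r₂
  | .wand φ₁ φ₂ => fun η H r =>
      ∀ (H' H'' : Heap A F) (r' r'' : M.carrier),
        H.Disjoint H' → H ∪ H' = H'' → M.le (M.op r r') r'' →
        Sat M φ₁ η H' r' → Sat M φ₂ η H'' r''
  | .all x φ => fun η H r => ∀ v : Val A, Sat M φ (Function.update η x v) H r
  | .ex x φ => fun η H r => ∃ v : Val A, Sat M φ (Function.update η x v) H r
  | .points t₁ f t₂ => fun η H _ =>
      ∃ a : A, t₁.eval η = .addr (some a) ∧ H = Finmap.singleton (a, f) (t₂.eval η)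
  | .res r₀ => fun _ H r => H = ∅ ∧ M.le r₀ r

/-- Propositional BI formulae over resource atoms (no magic wand). -/
inductive BIForm (R : Type) where
  | tt
  | emp
  | res (r : R)
  | and (φ₁ φ₂ : BIForm R)
  | or (φ₁ φ₂ : BIForm R)
  | imp (φ₁ φ₂ : BIForm R)
  | star (φ₁ φ₂ : BIForm R)

/-- The affine intuitionistic BI semantics over the resource monoid alone:
`BISat M φ r` is `r ⊨_bi φ`. -/
def BISat (M : ResMon) : BIForm M.carrier → M.carrier → Prop
  | .tt => fun _ => True
  | .emp => fun _ => True
  | .res r₀ => fun r => M.le r₀ r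
  | .and φ₁ φ₂ => fun r => BISat M φ₁ r ∧ BISat M φ₂ r
  | .or φ₁ φ₂ => fun r => BISat M φ₁ r ∨ BISat M φ₂ r
  | .imp φ₁ φ₂ => fun r => ∀ r', M.le r r' → BISat M φ₁ r' → BISat M φ₂ r'
  | .star φ₁ φ₂ => fun r =>
      ∃ r₁ r₂, M.le (M.op r₁ r₂) r ∧ BISat M φ₁ r₁ ∧ BISat M φ₂ r₂

/-- The inclusion of propositional BI formulae into the deep assertion logic. -/
def BIForm.toFormula {F R : Type} : BIForm R → Formula F R
  | .tt => .tt
  | .emp => .emp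
  | .res r₀ => .res r₀
  | .and φ₁ φ₂ => .and φ₁.toFormula φ₂.toFormula
  | .or φ₁ φ₂ => .or φ₁.toFormula φ₂.toFormula
  | .imp φ₁ φ₂ => .imp φ₁.toFormula φ₂.toFormula
  | .star φ₁ φ₂ => .star φ₁.toFormula φ₂.toFormula

/-! Without `-∗`, the only connective that splits the heap is `*`, and the empty heap splits
only as `∅ ∪ ∅`; so at the empty heap every clause of `Sat` reduces to the clause of `BISat`. -/

namespace Finmap

theorem union_eq_empty {α : Type*} {β : α → Type*} [DecidableEq α] {s₁ s₂ : Finmap β} :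
    s₁ ∪ s₂ = ∅ ↔ s₁ = ∅ ∧ s₂ = ∅ := by
  refine ⟨fun h => ?_, fun ⟨h₁, h₂⟩ => by rw [h₁, h₂, empty_union]⟩
  have hnot : ∀ a, a ∉ s₁ ∧ a ∉ s₂ := fun a =>
    not_or.1 <| mem_union.not.1 <| h ▸ notMem_empty
  exact ⟨ext_lookup fun a => by rw [lookup_eq_none.2 (hnot a).1, lookup_empty],
    ext_lookup fun a => by rw [lookup_eq_none.2 (hnot a).2, lookup_empty]⟩

end Finmap

theorem sat_star_empty_iff (M : ResMon) {A F : Type} [DecidableEq A] [DecidableEq F]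
    (φ ψ : Formula F M.carrier) (η : ℕ → Val A) (r : M.carrier) :
    Sat M (.star φ ψ) η (∅ : Heap A F) r ↔
      ∃ r₁ r₂, M.le (M.op r₁ r₂) r ∧ Sat M φ η ∅ r₁ ∧ Sat M ψ η ∅ r₂ := by
  constructor
  · rintro ⟨H₁, H₂, r₁, r₂, -, hunion, hle, hφ, hψ⟩
    obtain ⟨rfl, rfl⟩ := Finmap.union_eq_empty.1 hunion
    exact ⟨r₁, r₂, hle, hφ, hψ⟩
  · rintro ⟨r₁, r₂, hle, hφ, hψ⟩
    exact ⟨∅, ∅, r₁, r₂, Finmap.disjoint_empty ∅, Finmap.empty_union, hle, hφ, hψ⟩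

/-- **Proposition.** For a propositional BI formula `φ` with only resource atoms,
`r ⊨_bi φ` iff `η, (∅, r) ⊨ φ` in the heap-and-resource semantics at the empty
heap. -/
theorem bi_sublogic (M : ResMon) {A F : Type} [DecidableEq A] [DecidableEq F]
    (φ : BIForm M.carrier) (r : M.carrier) (η : ℕ → Val A) :
    BISat M φ r ↔ Sat M (BIForm.toFormula φ : Formula F M.carrier) η (∅ : Heap A F) r := by
  induction φ generalizing r with
  | star φ₁ φ₂ ih₁ ih₂ => simp only [BIForm.toFormula, BISat, sat_star_empty_iff, ih₁, ih₂]
  | res r₀ => simp only [BIForm.toFormula, BISat, Sat, true_and]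
  | _ => simp only [BIForm.toFormula, BISat, Sat, *]
end

section
/- Satisfaction in the deep assertion logic is upward closed in the resource component: for every assertion formula φ, every environment η, every heap H and all consumable resources r, r', if η, (H, r) ⊨ φ and r ⊑ r', then η, (H, r') ⊨ φ. -/
/-!
Intuitionistic implication and the magic wand quantify over all larger resources, and the
separating conjunction and `R_{r₀}` only bound the resource from below, so these clauses are
upward closed for arbitrary subformulas, by transitivity of `⊑` (and monotonicity of `·` for
the wand). The other connectives inherit upward closure from their subformulas.
-/

namespace Sat

variable {M : ResMon} {A F : Type} [DecidableEq A] [DecidableEq F]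
  {φ₁ φ₂ : Formula F M.carrier} {η : ℕ → Val A} {H : Heap A F} {r r' : M.carrier}

theorem imp_mono (hsat : Sat M (.imp φ₁ φ₂) η H r) (hle : M.le r r') :
    Sat M (.imp φ₁ φ₂) η H r' :=
  fun _ hle' h₁ => hsat _ (M.le_trans hle hle') h₁

theorem star_mono (hsat : Sat M (.star φ₁ φ₂) η H r) (hle : M.le r r') :
    Sat M (.star φ₁ φ₂) η H r' := by
  obtain ⟨H₁, H₂, r₁, r₂, hdisj, hunion, hop, h₁, h₂⟩ := hsat
  exact ⟨H₁, H₂, r₁, r₂, hdisj, hunion, M.le_trans hop hle, h₁, h₂⟩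

theorem wand_mono (hsat : Sat M (.wand φ₁ φ₂) η H r) (hle : M.le r r') :
    Sat M (.wand φ₁ φ₂) η H r' :=
  fun H' H'' s s'' hdisj hunion hop h₁ =>
    hsat H' H'' s s'' hdisj hunion (M.le_trans (M.op_mono hle (M.le_refl s)) hop) h₁

theorem res_mono {r₀ : M.carrier} (hsat : Sat M (.res r₀) η H r) (hle : M.le r r') :
    Sat M (.res r₀) η H r' :=
  ⟨hsat.1, M.le_trans hsat.2 hle⟩

end Sat

/-- **Theorem.** Satisfaction in the deep assertion logic is upward closed in the
resource component: if `η, (H, r) ⊨ φ` and `r ⊑ r'` then `η, (H, r') ⊨ φ`. -/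
theorem sat_resource_mono (M : ResMon) {A F : Type} [DecidableEq A] [DecidableEq F]
    (φ : Formula F M.carrier) (η : ℕ → Val A) (H : Heap A F) (r r' : M.carrier)
    (hsat : Sat M φ η H r) (hle : M.le r r') :
    Sat M φ η H r' := by
  induction φ generalizing η H r r' with
  | tt | eq | ne | emp | points => exact hsat
  | and φ₁ φ₂ ih₁ ih₂ => exact ⟨ih₁ η H r r' hsat.1 hle, ih₂ η H r r' hsat.2 hle⟩
  | or φ₁ φ₂ ih₁ ih₂ => exact hsat.imp (ih₁ η H r r' · hle) (ih₂ η H r r' · hle)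
  | imp => exact Sat.imp_mono hsat hle
  | star => exact Sat.star_mono hsat hle
  | wand => exact Sat.wand_mono hsat hle
  | all x φ ih => exact fun v => ih _ H r r' (hsat v) hle
  | ex x φ ih => exact hsat.imp fun v h => ih _ H r r' h hle
  | res => exact Sat.res_mono hsat hle
end

section
/- A null-terminated resource-carrying list segment pins down a linear amount of resource: if η, (H, r) ⊨ lseg(r₀, t, null), then there exists a natural number n (the number of list nodes) such that the domain of H has exactly 2n elements and the n-fold combination r₀ · r₀ · ⋯ · r₀ (n factors, equal to e when n = 0) satisfies r₀ⁿ ⊑ r. -/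
/-- The resource-carrying list-segment predicate: the least predicate satisfying
`lseg(r₀, x, y) ⟺ (x = y ∧ emp) ∨ (∃d,z. x.data ↦ d * x.next ↦ z * R_{r₀} * lseg(r₀, z, y))`,
interpreted in the heap-and-resource semantics. `dataF` and `nextF` are the
`data` and `next` field names. -/
inductive Lseg (M : ResMon) {A F : Type} [DecidableEq A] [DecidableEq F]
    (dataF nextF : F) (r₀ : M.carrier) : Val A → Val A → Heap A F → M.carrier → Prop where
  | nil (x : Val A) (r : M.carrier) : Lseg M dataF nextF r₀ x x ∅ r
  | cons (a : A) (d z y : Val A) (Ht : Heap A F) (rt r : M.carrier)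
      (hd : (a, dataF) ∉ Ht) (hn : (a, nextF) ∉ Ht)
      (hr : M.le (M.op r₀ rt) r)
      (htail : Lseg M dataF nextF r₀ z y Ht rt) :
      Lseg M dataF nextF r₀ (.addr (some a)) y
        ((Ht.insert (a, nextF) z).insert (a, dataF) d) r

/-- `n`-fold combination `r₀ · r₀ · ⋯ · r₀` (`n` factors, `e` when `n = 0`). -/
def ResMon.pow (M : ResMon) (r₀ : M.carrier) : ℕ → M.carrier
  | 0 => M.e
  | n + 1 => M.op r₀ (M.pow r₀ n)

theorem Finmap.card_keys_insert_of_notMem {α : Type*} {β : α → Type*} [DecidableEq α]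
    {a : α} {b : β a} {s : Finmap β} (ha : a ∉ s) :
    (s.insert a b).keys.card = s.keys.card + 1 := by
  have hkeys : (s.insert a b).keys = Insert.insert a s.keys := by
    ext k
    simp [Finmap.mem_keys, Finmap.mem_insert]
  rw [hkeys, Finset.card_insert_of_notMem (mt Finmap.mem_keys.mp ha)]

theorem ResMon.op_le_op_left (M : ResMon) (c : M.carrier) {a b : M.carrier} (h : M.le a b) :
    M.le (M.op c a) (M.op c b) :=
  M.op_mono (M.le_refl c) h

theorem Lseg.exists_card_keys_eq_two_mul_and_pow_le {M : ResMon} {A F : Type}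
    [DecidableEq A] [DecidableEq F] {dataF nextF : F} (hfields : dataF ≠ nextF)
    {r₀ : M.carrier} {x y : Val A} {H : Heap A F} {r : M.carrier}
    (h : Lseg M dataF nextF r₀ x y H r) :
    ∃ n : ℕ, H.keys.card = 2 * n ∧ M.le (M.pow r₀ n) r := by
  induction h with
  | nil x r => exact ⟨0, by simp, M.e_le r⟩
  | cons a d z y Ht rt r hd hn hr _ ih =>
    obtain ⟨n, hcard, hle⟩ := ih
    have hd' : (a, dataF) ∉ Ht.insert (a, nextF) z := by
      simpa [Finmap.mem_insert, hfields] using hd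
    refine ⟨n + 1, ?_, M.le_trans (M.op_le_op_left r₀ hle) hr⟩
    rw [Finmap.card_keys_insert_of_notMem hd', Finmap.card_keys_insert_of_notMem hn, hcard]
    ring

/-- **Theorem.** A null-terminated resource-carrying list segment pins down a
linear amount of resource: if `η, (H, r) ⊨ lseg(r₀, t, null)` then there is a
natural number `n` (the number of list nodes) such that the domain of `H` has
exactly `2n` elements and `r₀ⁿ ⊑ r`. -/
theorem lseg_null_resource (M : ResMon) {A F : Type} [DecidableEq A] [DecidableEq F]
    (dataF nextF : F) (hfields : dataF ≠ nextF) (r₀ : M.carrier)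
    (t : Term) (η : ℕ → Val A) (H : Heap A F) (r : M.carrier)
    (hsat : Lseg M dataF nextF r₀ (t.eval η) (Val.null : Val A) H r) :
    ∃ n : ℕ, H.keys.card = 2 * n ∧ M.le (M.pow r₀ n) r :=
  Lseg.exists_card_keys_eq_two_mul_and_pow_le hfields hsat
end

section
/- Null-terminated resource-carrying list segments compose: for all terms t₁, t₂, every consumable resource r₀, every environment η and every heap–resource pair (H, r), if η, (H, r) ⊨ lseg(r₀, t₁, t₂) * lseg(r₀, t₂, null), then η, (H, r) ⊨ lseg(r₀, t₁, null). -/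
namespace Finmap

variable {α : Type*} {β : α → Type*} [DecidableEq α]

theorem disjoint_insert_left {a : α} {b : β a} {s t : Finmap β} :
    (s.insert a b).Disjoint t ↔ a ∉ t ∧ s.Disjoint t := by
  simp only [Finmap.Disjoint, Finmap.mem_insert, forall_eq_or_imp]

end Finmap

namespace ResMon

variable (M : ResMon)

theorem e_op (a : M.carrier) : M.op M.e a = a := by
  rw [M.op_comm, M.op_e]

theorem le_op_self (a b : M.carrier) : M.le b (M.op a b) := by
  simpa only [e_op] using M.op_mono (M.e_le a) (M.le_refl b)

end ResMon

namespace Lseg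

variable {M : ResMon} {A F : Type} [DecidableEq A] [DecidableEq F]
  {dataF nextF : F} {r₀ : M.carrier}

theorem mono {x y : Val A} {H : Heap A F} {r r' : M.carrier}
    (h : Lseg M dataF nextF r₀ x y H r) (hle : M.le r r') :
    Lseg M dataF nextF r₀ x y H r' := by
  cases h with
  | nil x r => exact .nil x r'
  | cons a d z y Ht rt r hd hn hr htail =>
      exact .cons a d z y Ht rt r' hd hn (M.le_trans hr hle) htail

/- `cons` does not demand `x ≠ y`, so the first segment may pass through `y`, and no
condition on the end `z` is needed. -/
theorem append {x y z : Val A} {H₁ H₂ : Heap A F} {r₁ r₂ r : M.carrier}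
    (h₁ : Lseg M dataF nextF r₀ x y H₁ r₁) (h₂ : Lseg M dataF nextF r₀ y z H₂ r₂)
    (hdisj : H₁.Disjoint H₂) (hle : M.le (M.op r₁ r₂) r) :
    Lseg M dataF nextF r₀ x z (H₁ ∪ H₂) r := by
  induction h₁ generalizing r with
  | nil x r₁ =>
      rw [Finmap.empty_union]
      exact h₂.mono (M.le_trans (M.le_op_self r₁ r₂) hle)
  | cons a d w y Ht rt r₁ hd hn hr _ ih =>
      obtain ⟨hd₂, hn₂, hdisj'⟩ : (a, dataF) ∉ H₂ ∧ (a, nextF) ∉ H₂ ∧ Ht.Disjoint H₂ := by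
        simpa only [Finmap.disjoint_insert_left] using hdisj
      rw [← Finmap.insert_union, ← Finmap.insert_union]
      have hres : M.le (M.op r₀ (M.op rt r₂)) r := by
        rw [← M.op_assoc]
        exact M.le_trans (M.op_mono hr (M.le_refl r₂)) hle
      exact .cons a d w z (Ht ∪ H₂) (M.op rt r₂) r
        (by simp only [Finmap.mem_union, hd, hd₂, or_self, not_false_eq_true])
        (by simp only [Finmap.mem_union, hn, hn₂, or_self, not_false_eq_true])
        hres (ih h₂ hdisj' (M.le_refl _))

end Lseg

theorem lseg_append_null_general (M : ResMon) {A F : Type} [DecidableEq A] [DecidableEq F]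
    (dataF nextF : F) (r₀ : M.carrier)
    (t₁ t₂ : Term) (η : ℕ → Val A) (H : Heap A F) (r : M.carrier)
    (hsat : ∃ (H₁ H₂ : Heap A F) (r₁ r₂ : M.carrier),
      H₁.Disjoint H₂ ∧ H₁ ∪ H₂ = H ∧ M.le (M.op r₁ r₂) r ∧
      Lseg M dataF nextF r₀ (t₁.eval η) (t₂.eval η) H₁ r₁ ∧
      Lseg M dataF nextF r₀ (t₂.eval η) (Val.null : Val A) H₂ r₂) :
    Lseg M dataF nextF r₀ (t₁.eval η) (Val.null : Val A) H r := by
  obtain ⟨H₁, H₂, r₁, r₂, hdisj, hunion, hle, h₁, h₂⟩ := hsat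
  subst hunion
  exact h₁.append h₂ hdisj hle

/-- **Theorem.** Null-terminated resource-carrying list segments compose: if
`η, (H, r) ⊨ lseg(r₀, t₁, t₂) * lseg(r₀, t₂, null)` then
`η, (H, r) ⊨ lseg(r₀, t₁, null)`. -/
theorem lseg_append_null (M : ResMon) {A F : Type} [DecidableEq A] [DecidableEq F]
    (dataF nextF : F) (hfields : dataF ≠ nextF) (r₀ : M.carrier)
    (t₁ t₂ : Term) (η : ℕ → Val A) (H : Heap A F) (r : M.carrier)
    (hsat : ∃ (H₁ H₂ : Heap A F) (r₁ r₂ : M.carrier),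
      H₁.Disjoint H₂ ∧ H₁ ∪ H₂ = H ∧ M.le (M.op r₁ r₂) r ∧
      Lseg M dataF nextF r₀ (t₁.eval η) (t₂.eval η) H₁ r₁ ∧
      Lseg M dataF nextF r₀ (t₂.eval η) (Val.null : Val A) H₂ r₂) :
    Lseg M dataF nextF r₀ (t₁.eval η) (Val.null : Val A) H r :=
  lseg_append_null_general M dataF nextF r₀ t₁ t₂ η H r hsat
end

section
/- The additive shift identity for polynomial potential: for every k ≥ 1, all rationals p₁, …, p_k (setting p_{k+1} := 0), and every natural number n, ∑_{i=1}^{k} C(n+1, i) · pᵢ = p₁ + ∑_{i=1}^{k} C(n, i) · (pᵢ + p_{i+1}), where C(n, i) denotes the binomial coefficient. Hence a list of length n+1 annotated with (p₁, …, p_k) carries exactly p₁ resource for its head plus the potential of a list of length n annotated with the additive shift ◁(p₁, …, p_k) = (p₁+p₂, p₂+p₃, …, p_{k−1}+p_k, p_k). -/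
/-!
Pascal's rule `C(n+1, i) = C(n, i) + C(n, i-1)` splits the potential of a list of length `n+1`
into the potential of its tail and a copy of the annotation shifted down by one index, whose
index-`0` term is `p₁`. Summing up to `k` leaves one boundary term `C(n, k) · p_{k+1}`; keeping it
explicit makes the identity hold for every `k` (by induction), and `p_{k+1} = 0` removes it.
-/

open Finset

variable {R : Type*} [CommRing R]

/-- An annotation `(p₁, …, p_k)` is encoded as `p : ℕ → R` read on the indices `1, …, k`. -/
def listPotential (p : ℕ → R) (k n : ℕ) : R :=
  ∑ i ∈ Icc 1 k, (n.choose i : R) * p i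

/-- On `p` with `p (k + 1) = 0` this is `◁(p₁, …, p_k)`, whose last entry is `p_k`. -/
def additiveShift (p : ℕ → R) (i : ℕ) : R :=
  p i + p (i + 1)

theorem listPotential_zero_left (p : ℕ → R) (n : ℕ) : listPotential p 0 n = 0 := by
  simp [listPotential]

theorem listPotential_succ_left (p : ℕ → R) (k n : ℕ) :
    listPotential p (k + 1) n = listPotential p k n + (n.choose (k + 1) : R) * p (k + 1) :=
  sum_Icc_succ_top (Nat.le_add_left 1 k) _

theorem listPotential_succ_add_choose_mul (p : ℕ → R) (k n : ℕ) :
    listPotential p k (n + 1) + (n.choose k : R) * p (k + 1) =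
      p 1 + listPotential (additiveShift p) k n := by
  induction k with
  | zero => simp [listPotential_zero_left]
  | succ k ih =>
    simp only [listPotential_succ_left, additiveShift, Nat.choose_succ_succ', Nat.cast_add]
    linear_combination ih

theorem additive_shift_identity_general (k : ℕ) (p : ℕ → ℚ) (hp : p (k + 1) = 0)
    (n : ℕ) :
    ∑ i ∈ Finset.Icc 1 k, ((n + 1).choose i : ℚ) * p i =
      p 1 + ∑ i ∈ Finset.Icc 1 k, (n.choose i : ℚ) * (p i + p (i + 1)) := by
  simpa [listPotential, additiveShift, hp] using listPotential_succ_add_choose_mul p k n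

/-- **Theorem (additive shift identity for polynomial potential).** For every
`k ≥ 1`, all rationals `p₁, …, p_k` (with `p_{k+1} := 0`), and every natural
number `n`,
`∑_{i=1}^{k} C(n+1, i) · pᵢ = p₁ + ∑_{i=1}^{k} C(n, i) · (pᵢ + p_{i+1})`;
so a list of length `n+1` annotated with `(p₁, …, p_k)` carries exactly `p₁`
resource for its head plus the potential of a list of length `n` annotated with
the additive shift `◁(p₁, …, p_k) = (p₁+p₂, …, p_{k−1}+p_k, p_k)`. -/
theorem additive_shift_identity (k : ℕ) (hk : 1 ≤ k) (p : ℕ → ℚ) (hp : p (k + 1) = 0)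
    (n : ℕ) :
    ∑ i ∈ Finset.Icc 1 k, ((n + 1).choose i : ℚ) * p i =
      p 1 + ∑ i ∈ Finset.Icc 1 k, (n.choose i : ℚ) * (p i + p (i + 1)) :=
  additive_shift_identity_general k p hp n
end
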